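/- Let n ≥ 1 and let a_1, …, a_n be positive integers with a_1 > 1. If n is odd, then the continuant N[𝓛_1, …, 𝓛_n] ∈ K lies in the polynomial subring ℚ[y_1, …, y_d] (i.e., it has no negative powers of the variables, despite each even-indexed 𝓛_i being a genuine Laurent expression). If n is even, then (∏_{j=1}^{ℓ_n − 1} y_j) · N[𝓛_1, …, 𝓛_n] lies in ℚ[y_1, …, y_d]. -/

import Mathlib

/-!
Put `D_m = 1` for odd `m` and `D_m = y_1 ⋯ y_{ℓ_m - 1}` for even `m`. Then
`N[𝓛_1, …, 𝓛_m] = F_m / D_m`, because `F_m / D_m` satisfies the continuant recurrence: multiplied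
through by `D_m` it becomes the recurrence defining the snake-graph polynomials `F_m`, the
denominators cancelling via `y_1 ⋯ y_{ℓ_{m-1}} = (y_1 ⋯ y_{ℓ_{m-1} - 1}) · y_{ℓ_{m-1}}` for odd `m`
and `y_1 ⋯ y_{ℓ_m - 1} = (y_1 ⋯ y_{ℓ_{m-2} - 1}) · (y_{ℓ_{m-2}} ⋯ y_{ℓ_m - 1})` for even `m`
(both need `ℓ_i ≥ 1`, i.e. `a_1 > 0`). Since `F_m` is built from polynomials by sums and
products, it is a polynomial.
-/

open MvPolynomial Finset

/-- The ambient field `K = ℚ(y_1, y_2, …)` (only `y_1,…,y_d` are used). -/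
abbrev Kf : Type := FractionRing (MvPolynomial ℕ ℚ)

/-- The variable `y_j`, viewed in the fraction field. -/
noncomputable def y (j : ℕ) : Kf := algebraMap (MvPolynomial ℕ ℚ) Kf (X j)

/-- Partial sums `ℓ_i = a_1 + ⋯ + a_i`, with `ℓ_0 = 0`. -/
def ell (a : ℕ → ℕ) (i : ℕ) : ℕ := ∑ s ∈ Finset.Icc 1 i, a s

/-- `φ_i`. -/
noncomputable def phi (a : ℕ → ℕ) (i : ℕ) : Kf :=
  if Odd i then
    ∑ k ∈ Finset.Icc (ell a (i-1)) (ell a i - 1), ∏ j ∈ Finset.Icc (ell a (i-1) + 1) k, y j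
  else
    ∑ k ∈ Finset.Icc (ell a (i-1) + 1) (ell a i), ∏ j ∈ Finset.Icc k (ell a i - 1), y j

/-- `C_i`. -/
noncomputable def Cc (a : ℕ → ℕ) (i : ℕ) : Kf :=
  if Odd i then ∏ j ∈ Finset.Icc 1 (ell a (i-1)), y j
  else ∏ j ∈ Finset.Icc 1 (ell a i - 1), (y j)⁻¹

/-- `𝓛_i = φ_i C_i`. -/
noncomputable def Lr (a : ℕ → ℕ) (i : ℕ) : Kf := phi a i * Cc a i

/-- The continuant `N[b_1,…,b_m]`. -/
def contN {R : Type*} [CommSemiring R] (b : ℕ → R) : ℕ → R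
  | 0 => 1
  | 1 => b 1
  | (m+2) => b (m+2) * contN b (m+1) + contN b m

/-- The F-polynomials `F_m = F(𝒢[a_1,…,a_m])`. -/
noncomputable def F (a : ℕ → ℕ) : ℕ → Kf
  | 0 => 1
  | 1 => phi a 1
  | 2 => phi a 1 * phi a 2 + ∏ j ∈ Finset.Icc 1 (ell a 2 - 1), y j
  | (m+3) =>
    if Odd (m+3) then
      y (ell a (m+2)) * phi a (m+3) * F a (m+2) + F a (m+1)
    else
      phi a (m+3) * F a (m+2) + (∏ j ∈ Finset.Icc (ell a (m+1)) (ell a (m+3) - 1), y j) * F a (m+1)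

section ProductSplitting

variable {M : Type*} [CommMonoid M] (f : ℕ → M)

theorem prod_Icc_one_eq_prod_Icc_one_sub_one_mul {t : ℕ} (ht : 1 ≤ t) :
    ∏ j ∈ Icc 1 t, f j = (∏ j ∈ Icc 1 (t - 1), f j) * f t := by
  obtain ⟨r, rfl⟩ := Nat.exists_eq_add_of_le' ht
  simpa using prod_Icc_succ_top (by omega : 1 ≤ r + 1) f

theorem prod_Icc_one_sub_one_mul_prod_Icc {p q : ℕ} (hp : 1 ≤ p) (hpq : p ≤ q + 1) :
    (∏ j ∈ Icc 1 (p - 1), f j) * ∏ j ∈ Icc p q, f j = ∏ j ∈ Icc 1 q, f j := by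
  obtain ⟨r, rfl⟩ := Nat.exists_eq_add_of_le' hp
  simpa [← Icc_add_one_left_eq_Ioc] using prod_Ioc_consecutive f (Nat.zero_le r) (by omega : r ≤ q)

end ProductSplitting

theorem contN_eq_of_recurrence {R : Type*} [CommSemiring R] (b G : ℕ → R) (h0 : G 0 = 1)
    (h1 : G 1 = b 1) (hrec : ∀ m, G (m + 2) = b (m + 2) * G (m + 1) + G m) (m : ℕ) :
    contN b m = G m := by
  fun_induction contN b m with
  | case1 => exact h0.symm
  | case2 => exact h1.symm
  | case3 m ih₁ ih₂ => rw [hrec, ih₁, ih₂]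

theorem y_mem_range (j : ℕ) : y j ∈ (algebraMap (MvPolynomial ℕ ℚ) Kf).range := ⟨X j, rfl⟩

theorem y_ne_zero (j : ℕ) : y j ≠ 0 :=
  (map_ne_zero_iff _ (IsFractionRing.injective (MvPolynomial ℕ ℚ) Kf)).mpr (X_ne_zero j)

theorem prod_y_ne_zero (s : Finset ℕ) : ∏ j ∈ s, y j ≠ 0 :=
  prod_ne_zero_iff.mpr fun j _ => y_ne_zero j

theorem prod_y_mem_range (s : Finset ℕ) :
    ∏ j ∈ s, y j ∈ (algebraMap (MvPolynomial ℕ ℚ) Kf).range :=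
  Subring.prod_mem _ fun j _ => y_mem_range j

theorem phi_mem_range (a : ℕ → ℕ) (i : ℕ) :
    phi a i ∈ (algebraMap (MvPolynomial ℕ ℚ) Kf).range := by
  unfold phi
  split <;> exact Subring.sum_mem _ fun k _ => prod_y_mem_range _

theorem F_mem_range (a : ℕ → ℕ) (m : ℕ) : F a m ∈ (algebraMap (MvPolynomial ℕ ℚ) Kf).range := by
  fun_induction F a m with
  | case1 => exact one_mem _
  | case2 => exact phi_mem_range a 1
  | case3 => exact add_mem (mul_mem (phi_mem_range a 1) (phi_mem_range a 2)) (prod_y_mem_range _)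
  | case4 _ _ h₂ h₁ =>
    exact add_mem (mul_mem (mul_mem (y_mem_range _) (phi_mem_range a _)) h₂) h₁
  | case5 _ _ h₂ h₁ =>
    exact add_mem (mul_mem (phi_mem_range a _) h₂) (mul_mem (prod_y_mem_range _) h₁)

theorem ell_zero (a : ℕ → ℕ) : ell a 0 = 0 := by simp [ell]

theorem ell_mono (a : ℕ → ℕ) : Monotone (ell a) := fun _ _ h =>
  sum_le_sum_of_subset (Icc_subset_Icc_right h)

theorem one_le_ell {a : ℕ → ℕ} (ha : 0 < a 1) {m : ℕ} (hm : 1 ≤ m) : 1 ≤ ell a m :=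
  calc 1 ≤ a 1 := ha
    _ = ell a 1 := by simp [ell]
    _ ≤ ell a m := ell_mono a hm

theorem Lr_of_odd (a : ℕ → ℕ) {i : ℕ} (hi : Odd i) :
    Lr a i = phi a i * ∏ j ∈ Icc 1 (ell a (i - 1)), y j := by
  rw [Lr, Cc, if_pos hi]

theorem Lr_of_not_odd (a : ℕ → ℕ) {i : ℕ} (hi : ¬Odd i) :
    Lr a i = phi a i / ∏ j ∈ Icc 1 (ell a i - 1), y j := by
  rw [Lr, Cc, if_neg hi, prod_inv_distrib, div_eq_mul_inv]

/-- `D_m`, the Laurent monomial clearing the denominator of `N[𝓛_1, …, 𝓛_m]`. -/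
noncomputable def contDenom (a : ℕ → ℕ) (m : ℕ) : Kf :=
  if Odd m then 1 else ∏ j ∈ Icc 1 (ell a m - 1), y j

theorem contDenom_of_odd (a : ℕ → ℕ) {m : ℕ} (hm : Odd m) : contDenom a m = 1 :=
  if_pos hm

theorem contDenom_of_not_odd (a : ℕ → ℕ) {m : ℕ} (hm : ¬Odd m) :
    contDenom a m = ∏ j ∈ Icc 1 (ell a m - 1), y j :=
  if_neg hm

theorem F_div_contDenom_two (a : ℕ → ℕ) :
    F a 2 / contDenom a 2 = Lr a 2 * (F a 1 / contDenom a 1) + F a 0 / contDenom a 0 := by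
  have hP := prod_y_ne_zero (Icc 1 (ell a 2 - 1))
  rw [contDenom_of_not_odd a (by decide), contDenom_of_odd a (by decide),
    contDenom_of_not_odd a (by decide), Lr_of_not_odd a (by decide), ell_zero]
  simp only [F, zero_tsub, Icc_eq_empty_of_lt zero_lt_one, prod_empty]
  field_simp

theorem F_div_contDenom_of_odd {a : ℕ → ℕ} (ha : 0 < a 1) {k : ℕ} (hk : Odd (k + 3)) :
    F a (k + 3) / contDenom a (k + 3)
      = Lr a (k + 3) * (F a (k + 2) / contDenom a (k + 2)) + F a (k + 1) / contDenom a (k + 1) := by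
  have h₂ : ¬Odd (k + 2) := by grind
  have h₁ : Odd (k + 1) := by grind
  have hP := prod_y_ne_zero (Icc 1 (ell a (k + 2) - 1))
  rw [Lr_of_odd a hk, show k + 3 - 1 = k + 2 by omega,
    prod_Icc_one_eq_prod_Icc_one_sub_one_mul y (one_le_ell ha (by omega : 1 ≤ k + 2)),
    contDenom_of_odd a hk, contDenom_of_not_odd a h₂, contDenom_of_odd a h₁, F, if_pos hk]
  field_simp

theorem F_div_contDenom_of_not_odd {a : ℕ → ℕ} (ha : 0 < a 1) {k : ℕ} (hk : ¬Odd (k + 3)) :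
    F a (k + 3) / contDenom a (k + 3)
      = Lr a (k + 3) * (F a (k + 2) / contDenom a (k + 2)) + F a (k + 1) / contDenom a (k + 1) := by
  have h₂ : Odd (k + 2) := by grind
  have h₁ : ¬Odd (k + 1) := by grind
  have hQ := prod_y_ne_zero (Icc (ell a (k + 1)) (ell a (k + 3) - 1))
  have hmono : ell a (k + 1) ≤ ell a (k + 3) - 1 + 1 := by
    have := ell_mono a (by omega : k + 1 ≤ k + 3)
    omega
  rw [contDenom_of_not_odd a hk, contDenom_of_odd a h₂, contDenom_of_not_odd a h₁, F, if_neg hk,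
    Lr_of_not_odd a hk, ← prod_Icc_one_sub_one_mul_prod_Icc y
    (one_le_ell ha (by omega : 1 ≤ k + 1)) hmono]
  field_simp

theorem contN_Lr_eq_F_div_contDenom {a : ℕ → ℕ} (ha : 0 < a 1) (m : ℕ) :
    contN (Lr a) m = F a m / contDenom a m := by
  refine contN_eq_of_recurrence (Lr a) (fun m => F a m / contDenom a m) ?_ ?_ ?_ m
  · simp [F, contDenom_of_not_odd a (by decide : ¬Odd 0), ell_zero]
  · simp [F, contDenom_of_odd a (by decide : Odd 1), Lr_of_odd a (by decide : Odd 1), ell_zero]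
  · rintro (_ | k)
    · exact F_div_contDenom_two a
    · by_cases hk : Odd (k + 3)
      · exact F_div_contDenom_of_odd ha hk
      · exact F_div_contDenom_of_not_odd ha hk

theorem continuant_is_polynomial_general
    (n : ℕ) (a : ℕ → ℕ) (ha1 : 1 < a 1) :
    (Odd n → contN (Lr a) n ∈ (algebraMap (MvPolynomial ℕ ℚ) Kf).range) ∧
    (Even n → (∏ j ∈ Finset.Icc 1 (ell a n - 1), y j) * contN (Lr a) n
      ∈ (algebraMap (MvPolynomial ℕ ℚ) Kf).range) := by
  rw [contN_Lr_eq_F_div_contDenom (by omega : 0 < a 1)]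
  refine ⟨fun hn => ?_, fun hn => ?_⟩
  · simpa [contDenom_of_odd a hn] using F_mem_range a n
  · rw [contDenom_of_not_odd a (Nat.not_odd_iff_even.mpr hn),
      mul_div_cancel₀ _ (prod_y_ne_zero _)]
    exact F_mem_range a n

/-- Laurent phenomenon for the continuant of the `𝓛_i`: for odd `n` the continuant
`N[𝓛_1,…,𝓛_n]` is a polynomial in `y_1,…,y_d`; for even `n` it becomes one after
multiplying by `∏_{j=1}^{ℓ_n − 1} y_j`. -/
theorem continuant_is_polynomial
    (n : ℕ) (hn : 1 ≤ n) (a : ℕ → ℕ)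
    (hpos : ∀ i, 1 ≤ i → i ≤ n → 0 < a i) (ha1 : 1 < a 1) :
    (Odd n → contN (Lr a) n ∈ (algebraMap (MvPolynomial ℕ ℚ) Kf).range) ∧
    (Even n → (∏ j ∈ Finset.Icc 1 (ell a n - 1), y j) * contN (Lr a) n
      ∈ (algebraMap (MvPolynomial ℕ ℚ) Kf).range) :=
  continuant_is_polynomial_general n a ha1
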